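/- Let t_1 < t_2 < ... < t_p be real numbers and let G be the p×n matrix over R_max with G_{ij} = t_i · (j-1) (ordinary multiplication, i.e., tropical power). The tropical cyclic polyhedral cone P(p,n) is the row space of G. Then for each fixed row index m ∈ [p-1], each j ∈ [i-1], and each k ∈ [i+1, n], the inequality t_{m+1}·i + t_m·j + x_k ⊕ t_m·i + t_{m+1}·k + x_j ≥ t_m·j + t_{m+1}·k + x_i (i.e., max(t_{m+1} i + t_m j + x_k, t_m i + t_{m+1} k + x_j) ≥ t_m j + t_{m+1} k + x_i) is valid for all x ∈ P(p,n), i.e., it is satisfied by every row of G. -/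

import Mathlib

open Finset

abbrev Rmax : Type := WithBot ℝ

noncomputable def tdot {ι : Type*} [Fintype ι] (a x : ι → Rmax) : Rmax :=
  univ.sup fun j => a j + x j

def rowSpace {p : ℕ} {ι : Type*} [Fintype ι] (G : Fin p → ι → Rmax) : Set (ι → Rmax) :=
  { x | ∃ lam : Fin p → Rmax, x = fun j => univ.sup fun r => lam r + G r j }

noncomputable def polar {ι : Type*} [Fintype ι] (K : Set (ι → Rmax)) :
    Set ((ι → Rmax) × (ι → Rmax)) :=
  { ab | ∀ x ∈ K, tdot ab.1 x ≤ tdot ab.2 x }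

def IsTropExtreme {α : Type*} [SemilatticeSup α] [OrderBot α] (C : Set α) (v : α) : Prop :=
  v ∈ C ∧ v ≠ ⊥ ∧ ∀ y ∈ C, ∀ z ∈ C, v = y ⊔ z → v = y ∨ v = z

noncomputable def unitv {n : ℕ} (i : Fin n) : Fin n → Rmax :=
  fun j => if j = i then (0 : Rmax) else ⊥

noncomputable def tdiv (a b : Rmax) : Rmax :=
  if a = ⊥ ∨ b = ⊥ then ⊥ else ((WithBot.unbotD 0 a - WithBot.unbotD 0 b : ℝ) : Rmax)

/-- validity, on the tropical cyclic polyhedral cone `P(p,n)`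
generated by the rows of `G` with `G_{rj} = t_r · (j-1)` (columns `0`-indexed
by `Fin n`, so `G r s = t r * s`), of the extreme inequalities
`t_{m+1}·i + t_m·j + x_k ⊕ t_m·i + t_{m+1}·k + x_j ≥ t_m·j + t_{m+1}·k + x_i`
for consecutive rows `m, m+1` and column positions `j < i < k` (the exponents
`i, j, k` being the `1`-indexed positions). -/
theorem statement19 {p n : ℕ} (t : Fin p → ℝ) (ht : StrictMono t)
    (G : Fin p → Fin n → Rmax)
    (hG : ∀ (r : Fin p) (s : Fin n), G r s = ((t r * (s : ℕ) : ℝ) : Rmax))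
    (m m' : Fin p) (hm : (m' : ℕ) = (m : ℕ) + 1)
    (i j k : Fin n) (hji : j < i) (hik : i < k) :
    ∀ x ∈ rowSpace G,
      ((t m * ((j : ℕ) + 1) + t m' * ((k : ℕ) + 1) : ℝ) : Rmax) + x i ≤
        (((t m' * ((i : ℕ) + 1) + t m * ((j : ℕ) + 1) : ℝ) : Rmax) + x k) ⊔
        (((t m * ((i : ℕ) + 1) + t m' * ((k : ℕ) + 1) : ℝ) : Rmax) + x j) := by

  rintro x ⟨lam, rfl⟩
  have : Nonempty (Fin p) := ⟨m⟩
  simp only []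
  obtain ⟨r0, -, hr0⟩ :=
    Finset.exists_mem_eq_sup (univ : Finset (Fin p)) univ_nonempty
      (fun r => lam r + G r i)
  rw [hr0]
  have hji' : (j : ℕ) < (i : ℕ) := hji
  have hik' : (i : ℕ) < (k : ℕ) := hik
  by_cases hc : t r0 ≤ t m
  · refine le_sup_of_le_right ?_
    have h1 : lam r0 + G r0 j ≤ univ.sup fun r => lam r + G r j :=
      Finset.le_sup (f := fun r => lam r + G r j) (Finset.mem_univ r0)
    refine le_trans ?_ (add_le_add_right h1 _)
    rw [hG, hG]
    have key : (t m * ((j : ℕ) + 1) + t m' * ((k : ℕ) + 1)) + t r0 * (i : ℕ) ≤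
        (t m * ((i : ℕ) + 1) + t m' * ((k : ℕ) + 1)) + t r0 * (j : ℕ) := by
      have hij : (0:ℝ) ≤ (i : ℕ) - (j : ℕ) := by
        have := (Nat.cast_lt (α := ℝ)).2 hji'
        linarith
      nlinarith [mul_le_mul_of_nonneg_right (sub_nonneg.2 hc) hij]
    calc ((t m * ((j : ℕ) + 1) + t m' * ((k : ℕ) + 1) : ℝ) : Rmax) +
          (lam r0 + ((t r0 * (i : ℕ) : ℝ) : Rmax))
        = (((t m * ((j : ℕ) + 1) + t m' * ((k : ℕ) + 1)) + t r0 * (i : ℕ) : ℝ) : Rmax)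
            + lam r0 := by push_cast; abel
      _ ≤ (((t m * ((i : ℕ) + 1) + t m' * ((k : ℕ) + 1)) + t r0 * (j : ℕ) : ℝ) : Rmax)
            + lam r0 := by
          exact add_le_add_left (WithBot.coe_le_coe.2 key) _
      _ = ((t m * ((i : ℕ) + 1) + t m' * ((k : ℕ) + 1) : ℝ) : Rmax) +
          (lam r0 + ((t r0 * (j : ℕ) : ℝ) : Rmax)) := by push_cast; abel
  · refine le_sup_of_le_left ?_
    have hm' : t m' ≤ t r0 := by
      have hr : m < r0 := (ht.lt_iff_lt).1 (lt_of_not_ge hc)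
      have : m' ≤ r0 := by
        rw [Fin.le_def, hm]
        exact hr
      exact ht.monotone this
    have h1 : lam r0 + G r0 k ≤ univ.sup fun r => lam r + G r k :=
      Finset.le_sup (f := fun r => lam r + G r k) (Finset.mem_univ r0)
    refine le_trans ?_ (add_le_add_right h1 _)
    rw [hG, hG]
    have key : (t m * ((j : ℕ) + 1) + t m' * ((k : ℕ) + 1)) + t r0 * (i : ℕ) ≤
        (t m' * ((i : ℕ) + 1) + t m * ((j : ℕ) + 1)) + t r0 * (k : ℕ) := by
      have hki : (0:ℝ) ≤ (k : ℕ) - (i : ℕ) := by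
        have := (Nat.cast_lt (α := ℝ)).2 hik'
        linarith
      nlinarith [mul_le_mul_of_nonneg_right (sub_nonneg.2 hm') hki]
    calc ((t m * ((j : ℕ) + 1) + t m' * ((k : ℕ) + 1) : ℝ) : Rmax) +
          (lam r0 + ((t r0 * (i : ℕ) : ℝ) : Rmax))
        = (((t m * ((j : ℕ) + 1) + t m' * ((k : ℕ) + 1)) + t r0 * (i : ℕ) : ℝ) : Rmax)
            + lam r0 := by push_cast; abel
      _ ≤ (((t m' * ((i : ℕ) + 1) + t m * ((j : ℕ) + 1)) + t r0 * (k : ℕ) : ℝ) : Rmax)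
            + lam r0 := by
          exact add_le_add_left (WithBot.coe_le_coe.2 key) _
      _ = ((t m' * ((i : ℕ) + 1) + t m * ((j : ℕ) + 1) : ℝ) : Rmax) +
          (lam r0 + ((t r0 * (k : ℕ) : ℝ) : Rmax)) := by push_cast; abel
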